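/- arXiv:math/0703554 — 2 statements merged into one kernel-verified Lean document; each statement's English description precedes it below -/
import Mathlib

section
/- Let $c > 0$ satisfy $c^2 \ln n \geq 1$ and let $G$ be a graph on $n$ vertices with at least $c n^2$ edges. Then $G$ contains a complete bipartite subgraph $K_2(s, t)$ with parts of sizes $s = \lfloor c^2 \ln n \rfloor$ and $t > n^{1 - c}$. -/
private lemma KST_log_le_div_e {u : ℝ} (hu : 0 < u) : Real.log u ≤ u / Real.exp 1 := by
  have he : (0:ℝ) < Real.exp 1 := Real.exp_pos 1
  have h := Real.log_le_sub_one_of_pos (show 0 < u / Real.exp 1 by positivity)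
  have h2 : Real.log (u / Real.exp 1) = Real.log u - 1 := by
    rw [Real.log_div (ne_of_gt hu) (ne_of_gt he), Real.log_exp]
  rw [h2] at h; linarith

private lemma KST_clogc {c : ℝ} (hc : 0 < c) : -(Real.exp 1)⁻¹ ≤ c * Real.log c := by
  have h := KST_log_le_div_e (show (0:ℝ) < c⁻¹ by positivity)
  rw [Real.log_inv] at h
  have h2 : c * (-Real.log c) ≤ c * (c⁻¹ / Real.exp 1) :=
    mul_le_mul_of_nonneg_left h hc.le
  have h3 : c * (c⁻¹ / Real.exp 1) = (Real.exp 1)⁻¹ := by field_simp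
  rw [h3] at h2; linarith

private lemma KST_log_one_sub {x : ℝ} (h0 : 0 ≤ x) (h2 : x ≤ 1/2) :
    -(2*x) ≤ Real.log (1 - x) := by
  have hx1 : (0:ℝ) < 1 - x := by linarith
  rw [Real.le_log_iff_exp_le hx1, Real.exp_neg]
  have he : 1 + 2*x ≤ Real.exp (2*x) := by linarith [Real.add_one_le_exp (2*x)]
  have hep : 0 < Real.exp (2*x) := Real.exp_pos _
  have hinv : (Real.exp (2*x))⁻¹ * Real.exp (2*x) = 1 := inv_mul_cancel₀ hep.ne'
  nlinarith [mul_le_mul_of_nonneg_left he (show (0:ℝ) ≤ 1 - x by linarith), hep,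
    mul_pos hep hx1]

set_option maxHeartbeats 1000000 in
/-- Key analytic inequality. -/
private lemma KST_key {n s : ℕ} {c : ℝ} (hn1 : (1:ℝ) < n) (hc : 0 < c) (hc2 : c ≤ 1/2)
    (hL1 : 1 ≤ c^2 * Real.log n) (hs : (s:ℝ) ≤ c^2 * Real.log n) :
    (n:ℝ)^s * (n:ℝ)^((1:ℝ)-c) < (c * n) * (c*n - s)^s := by
  set L := Real.log n with hLdef
  have hn0 : (0:ℝ) < n := by linarith
  have hL : 0 < L := Real.log_pos hn1
  have hE27 : (27:ℝ)/10 < Real.exp 1 := by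
    have := Real.exp_one_gt_d9; norm_num at this ⊢; linarith
  have hLn' : L * Real.exp 1 ≤ n := (le_div_iff₀ (Real.exp_pos 1)).mp (KST_log_le_div_e hn0)
  have hL27 : (27/10)*L ≤ n := by nlinarith [hL.le]
  -- s is small: 4 s ≤ c n
  have h4cL : 4*(c*L) ≤ n := by nlinarith [mul_nonneg (show (0:ℝ) ≤ 1/2 - c by linarith) hL.le]
  have hs4 : 4*(s:ℝ) ≤ c*n := by nlinarith [hc.le, hs, h4cL]
  have hs0 : (0:ℝ) ≤ s := Nat.cast_nonneg s
  have hcn0 : 0 < c*n := by positivity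
  have hdiff : 0 < c*n - s := by linarith
  set x : ℝ := (s:ℝ)/(c*n) with hxdef
  have hx0 : 0 ≤ x := by positivity
  have hxhalf : x ≤ 1/2 := by rw [hxdef, div_le_iff₀ hcn0]; linarith
  have hl1 : -(2*x) ≤ Real.log (1-x) := KST_log_one_sub hx0 hxhalf
  have h1mx : (0:ℝ) < 1 - x := by linarith
  -- bound 2 s x ≤ (5/27) c L
  have h2s : 2*(s:ℝ)^2 ≤ (5/27)*(c*L)*(c*n) := by
    have hss : (s:ℝ)^2 ≤ (c^2*L)^2 := by
      have := pow_le_pow_left₀ hs0 hs 2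
      simpa using this
    have hA : 2*(c^2*L) ≤ (5/27)*n := by
      nlinarith [mul_nonneg (show (0:ℝ) ≤ 1/4 - c^2 by nlinarith) hL.le, hL27]
    have hB := mul_le_mul_of_nonneg_right hA (show (0:ℝ) ≤ c^2*L by positivity)
    nlinarith [hss, hB]
  have hsx : 2*(s:ℝ)*x ≤ (5/27)*(c*L) := by
    have heq : 2*(s:ℝ)*x = (2*(s:ℝ)^2)/(c*n) := by rw [hxdef]; ring
    rw [heq, div_le_iff₀ hcn0]; linarith
  -- log c bounds
  have hlogc_neg : Real.log c ≤ 0 := Real.log_nonpos hc.le (by linarith)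
  have hclogc : -(10/27) ≤ c * Real.log c := by
    have h := KST_clogc hc
    have : (Real.exp 1)⁻¹ ≤ 10/27 := by
      rw [inv_le_comm₀ (Real.exp_pos 1) (by norm_num)]; norm_num; linarith
    linarith
  have hcL1 : 1 ≤ c*(c*L) := by nlinarith [hL1]
  have hcLpos : 0 < c*L := mul_pos hc hL
  -- pieces
  have p1 : -(10/27)*(c*L) ≤ (c*L)*(c*Real.log c) := by
    have h := mul_le_mul_of_nonneg_left hclogc hcLpos.le
    nlinarith [h]
  have p2 : (c*L)*(c*Real.log c) ≤ Real.log c := by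
    have t : (c*(c*L) - 1) * Real.log c ≤ 0 :=
      mul_nonpos_of_nonneg_of_nonpos (by linarith) hlogc_neg
    nlinarith [t]
  have p3 : (c*L)*(c*Real.log c) ≤ (s:ℝ) * Real.log c := by
    have t : (c^2*L - (s:ℝ)) * Real.log c ≤ 0 :=
      mul_nonpos_of_nonneg_of_nonpos (by linarith) hlogc_neg
    nlinarith [t]
  have p4 : -(2*(s:ℝ)*x) ≤ (s:ℝ) * Real.log (1-x) := by
    have h := mul_le_mul_of_nonneg_left hl1 hs0
    nlinarith [h]
  have hfinal : 0 < Real.log c + c*L + ((s:ℝ) * Real.log c + (s:ℝ) * Real.log (1-x)) := by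
    nlinarith [p1, p2, p3, p4, hsx, hcLpos]
  -- convert to the multiplicative statement
  have hLHS : (0:ℝ) < (n:ℝ)^s * (n:ℝ)^((1:ℝ)-c) := by positivity
  have hRHS : (0:ℝ) < (c*n) * (c*n - (s:ℝ))^s := mul_pos hcn0 (pow_pos hdiff s)
  rw [← Real.log_lt_log_iff hLHS hRHS]
  have hfac : c*n - (s:ℝ) = (c*n)*(1 - x) := by
    rw [hxdef]; field_simp
  rw [Real.log_mul (by positivity) (by positivity),
      Real.log_mul hcn0.ne' (pow_pos hdiff s).ne',
      Real.log_pow, Real.log_rpow hn0, Real.log_pow, hfac,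
      Real.log_mul hcn0.ne' h1mx.ne', Real.log_mul hc.ne' hn0.ne']
  rw [← hLdef]
  nlinarith [hfinal]

open Finset

set_option maxHeartbeats 1000000 in
/-- **Case `r = 2`.** Let `c > 0` satisfy `c² ln n ≥ 1` and let `G` be a graph on `n`
vertices with at least `c n²` edges. Then `G` contains a complete bipartite subgraph
`K_2(s, t)` with parts of sizes `s = ⌊c² ln n⌋` and `t > n^(1 - c)`. -/
theorem complete_bipartite_of_many_edges
    {V : Type*} [Fintype V] [DecidableEq V] (G : SimpleGraph V) [DecidableRel G.Adj]
    (c : ℝ) (hc : 0 < c) (hcn : 1 ≤ c ^ 2 * Real.log (Fintype.card V))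
    (hE : c * (Fintype.card V : ℝ) ^ 2 ≤ G.edgeFinset.card) :
    ∃ S T : Finset V, Disjoint S T ∧
      S.card = ⌊c ^ 2 * Real.log (Fintype.card V)⌋₊ ∧
      (Fintype.card V : ℝ) ^ ((1 : ℝ) - c) < (T.card : ℝ) ∧
      ∀ u ∈ S, ∀ v ∈ T, G.Adj u v := by
  classical
  set n := Fintype.card V with hndef
  -- basic facts about n
  have hn1 : (1:ℝ) < (n:ℝ) := by
    by_contra h
    push_neg at h
    have h0 : (0:ℝ) ≤ (n:ℝ) := Nat.cast_nonneg n
    have := Real.log_nonpos h0 h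
    nlinarith [sq_nonneg c]
  have hn0 : (0:ℝ) < (n:ℝ) := by linarith
  have hlogpos : 0 < Real.log n := Real.log_pos hn1
  have hn2 : 2 ≤ n := by exact_mod_cast show (2:ℝ) ≤ n by exact_mod_cast (by exact_mod_cast hn1 : (1:ℕ) < n)
  -- c ≤ 1/2
  have hEle : (G.edgeFinset.card : ℝ) ≤ (n:ℝ)*((n:ℝ)-1)/2 := by
    have h := SimpleGraph.card_edgeFinset_le_card_choose_two (G := G)
    have h2 : 2 * n.choose 2 = n * (n - 1) := by
      have ha1 : n.descFactorial 2 = 2 * n.choose 2 := by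
        rw [Nat.descFactorial_eq_factorial_mul_choose]; norm_num [Nat.factorial]
      have ha2 : n.descFactorial 2 = n * (n - 1) := by
        simp [Nat.descFactorial_succ, Nat.descFactorial_zero, Nat.mul_comm]
      omega
    have hcast : ((n.choose 2 : ℕ) : ℝ) = (n:ℝ)*((n:ℝ)-1)/2 := by
      have := congrArg (fun k : ℕ => (k:ℝ)) h2
      push_cast [Nat.cast_sub (by omega : 1 ≤ n)] at this
      linarith
    calc (G.edgeFinset.card : ℝ) ≤ (n.choose 2 : ℝ) := by exact_mod_cast h
      _ = (n:ℝ)*((n:ℝ)-1)/2 := hcast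
  have hc2 : c ≤ 1/2 := by nlinarith
  -- the part size s
  set s := ⌊c ^ 2 * Real.log n⌋₊ with hsdef
  have hs_le : (s:ℝ) ≤ c^2 * Real.log n := Nat.floor_le (by positivity)
  -- the threshold degree
  set a := ⌈c * (n:ℝ)⌉₊ with hadef
  have ha : c * n ≤ (a:ℝ) := Nat.le_ceil _
  -- high degree vertices
  set H := Finset.univ.filter (fun v : V => a ≤ G.degree v) with hHdef
  have hHcard : c * n ≤ (H.card : ℝ) := by
    have hsum : 2 * (c * (n:ℝ)^2) ≤ ∑ v : V, (G.degree v : ℝ) := by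
      have h := G.sum_degrees_eq_twice_card_edges
      have : (∑ v : V, (G.degree v : ℝ)) = 2 * (G.edgeFinset.card : ℝ) := by
        exact_mod_cast congrArg (fun k : ℕ => (k:ℝ)) h
      rw [this]; linarith
    have hsplit : ∑ v : V, (G.degree v : ℝ)
        ≤ (H.card : ℝ) * n + (n:ℝ) * (c * n) := by
      rw [← Finset.sum_filter_add_sum_filter_not Finset.univ (fun v : V => a ≤ G.degree v)]
      have h1 : ∑ v ∈ Finset.univ.filter (fun v : V => a ≤ G.degree v), (G.degree v : ℝ)
          ≤ (H.card : ℝ) * n := by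
        rw [hHdef]
        calc ∑ v ∈ Finset.univ.filter (fun v : V => a ≤ G.degree v), (G.degree v : ℝ)
            ≤ ∑ _v ∈ Finset.univ.filter (fun v : V => a ≤ G.degree v), (n:ℝ) := by
              apply Finset.sum_le_sum
              intro v _
              exact_mod_cast (G.degree_lt_card_verts v).le
          _ = _ := by rw [Finset.sum_const, nsmul_eq_mul]
      have h2 : ∑ v ∈ Finset.univ.filter (fun v : V => ¬ a ≤ G.degree v), (G.degree v : ℝ)
          ≤ (n:ℝ) * (c * n) := by
        calc ∑ v ∈ Finset.univ.filter (fun v : V => ¬ a ≤ G.degree v), (G.degree v : ℝ)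
            ≤ ∑ _v ∈ Finset.univ.filter (fun v : V => ¬ a ≤ G.degree v), (c * (n:ℝ)) := by
              apply Finset.sum_le_sum
              intro v hv
              have := (Finset.mem_filter.mp hv).2
              have hlt : G.degree v < a := by omega
              exact (Nat.lt_ceil.mp hlt).le
          _ ≤ (n:ℝ) * (c * n) := by
              rw [Finset.sum_const, nsmul_eq_mul]
              have hcard : ((Finset.univ.filter (fun v : V => ¬ a ≤ G.degree v)).card : ℝ) ≤ n := by
                exact_mod_cast Finset.card_filter_le _ _
              exact mul_le_mul_of_nonneg_right hcard (by positivity)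
      linarith
    nlinarith
  -- the double count
  have hcount : ∑ S ∈ Finset.powersetCard s (Finset.univ : Finset V),
      (Finset.univ.filter (fun v => ∀ u ∈ S, G.Adj u v)).card
      = ∑ v : V, (G.degree v).choose s := by
    calc ∑ S ∈ Finset.powersetCard s (Finset.univ : Finset V),
          (Finset.univ.filter (fun v => ∀ u ∈ S, G.Adj u v)).card
        = ∑ S ∈ Finset.powersetCard s (Finset.univ : Finset V),
            ∑ v : V, if ∀ u ∈ S, G.Adj u v then 1 else 0 := by
          refine Finset.sum_congr rfl fun S _ => ?_
          exact Finset.card_filter _ _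
      _ = ∑ v : V, ∑ S ∈ Finset.powersetCard s (Finset.univ : Finset V),
            if ∀ u ∈ S, G.Adj u v then 1 else 0 := Finset.sum_comm
      _ = ∑ v : V, (G.degree v).choose s := by
          refine Finset.sum_congr rfl fun v _ => ?_
          rw [← Finset.card_filter]
          have hset : (Finset.powersetCard s (Finset.univ : Finset V)).filter
              (fun S => ∀ u ∈ S, G.Adj u v) = Finset.powersetCard s (G.neighborFinset v) := by
            ext S
            simp only [Finset.mem_filter, Finset.mem_powersetCard]
            constructor
            · rintro ⟨⟨-, hcard⟩, hadj⟩
              refine ⟨fun u hu => ?_, hcard⟩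
              rw [SimpleGraph.mem_neighborFinset]
              exact (hadj u hu).symm
            · rintro ⟨hsub, hcard⟩
              refine ⟨⟨Finset.subset_univ S, hcard⟩, fun u hu => ?_⟩
              have hm := hsub hu
              rw [SimpleGraph.mem_neighborFinset] at hm
              exact hm.symm
          rw [hset, Finset.card_powersetCard, SimpleGraph.card_neighborFinset_eq_degree]
  -- main contradiction
  by_contra hcon
  push_neg at hcon
  have hTbound : ∀ S ∈ Finset.powersetCard s (Finset.univ : Finset V),
      (((Finset.univ.filter (fun v => ∀ u ∈ S, G.Adj u v)).card : ℝ)) ≤ (n:ℝ)^((1:ℝ)-c) := by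
    intro S hS
    by_contra hgt
    push_neg at hgt
    set T := Finset.univ.filter (fun v => ∀ u ∈ S, G.Adj u v) with hT
    have hdisj : Disjoint S T := by
      rw [Finset.disjoint_left]
      intro v hvS hvT
      have := (Finset.mem_filter.mp hvT).2
      exact G.irrefl (this v hvS)
    have hScard : S.card = s := (Finset.mem_powersetCard.mp hS).2
    obtain ⟨u, hu, v, hv, hnadj⟩ := hcon S T hdisj hScard hgt
    exact hnadj ((Finset.mem_filter.mp hv).2 u hu)
  -- upper bound on the double count
  have hsum_upper : (∑ v : V, ((G.degree v).choose s : ℝ))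
      ≤ (n.choose s : ℝ) * (n:ℝ)^((1:ℝ)-c) := by
    have : (∑ v : V, ((G.degree v).choose s : ℝ))
        = ∑ S ∈ Finset.powersetCard s (Finset.univ : Finset V),
            (((Finset.univ.filter (fun v => ∀ u ∈ S, G.Adj u v)).card : ℝ)) := by
      exact_mod_cast (congrArg (fun k : ℕ => (k:ℝ)) hcount).symm
    rw [this]
    calc ∑ S ∈ Finset.powersetCard s (Finset.univ : Finset V),
          (((Finset.univ.filter (fun v => ∀ u ∈ S, G.Adj u v)).card : ℝ))
        ≤ ∑ _S ∈ Finset.powersetCard s (Finset.univ : Finset V), (n:ℝ)^((1:ℝ)-c) :=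
          Finset.sum_le_sum hTbound
      _ = (n.choose s : ℝ) * (n:ℝ)^((1:ℝ)-c) := by
          rw [Finset.sum_const, nsmul_eq_mul, Finset.card_powersetCard, Finset.card_univ]
  -- lower bound on the double count
  have hsum_lower : (H.card : ℝ) * (a.choose s : ℝ) ≤ ∑ v : V, ((G.degree v).choose s : ℝ) := by
    calc (H.card : ℝ) * (a.choose s : ℝ) = ∑ _v ∈ H, (a.choose s : ℝ) := by
          rw [Finset.sum_const, nsmul_eq_mul]
      _ ≤ ∑ v ∈ H, ((G.degree v).choose s : ℝ) := by
          apply Finset.sum_le_sum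
          intro v hv
          exact_mod_cast Nat.choose_le_choose s (Finset.mem_filter.mp hv).2
      _ ≤ ∑ v : V, ((G.degree v).choose s : ℝ) := by
          apply Finset.sum_le_sum_of_subset_of_nonneg (Finset.filter_subset _ _)
          intro v _ _
          positivity
  -- s < a
  have hsa_r : (s:ℝ) < c * n := by
    have hlog_lt : Real.log n ≤ (n:ℝ) - 1 := Real.log_le_sub_one_of_pos hn0
    have h1 : c * Real.log n < n := by
      nlinarith [mul_nonneg (show (0:ℝ) ≤ 1/2 - c by linarith) hlogpos.le]
    have h2 : c^2 * Real.log n < c * n := by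
      nlinarith [mul_lt_mul_of_pos_left h1 hc]
    linarith
  have hsa : s < a := by
    have : (s:ℝ) < (a:ℝ) := lt_of_lt_of_le hsa_r ha
    exact_mod_cast this
  -- nat inequalities, cast to ℝ
  have hfac1 : (((a + 1 - s)^s : ℕ) : ℝ) ≤ (s.factorial : ℝ) * (a.choose s : ℝ) := by
    have h := Nat.pow_sub_le_descFactorial a s
    rw [Nat.descFactorial_eq_factorial_mul_choose] at h
    exact_mod_cast h
  have hfac2 : (s.factorial : ℝ) * (n.choose s : ℝ) ≤ ((n:ℝ))^s := by
    have h : s.factorial * n.choose s ≤ n^s := by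
      rw [← Nat.descFactorial_eq_factorial_mul_choose]
      exact Nat.descFactorial_le_pow n s
    exact_mod_cast h
  have hcast_sub : (((a + 1 - s : ℕ)) : ℝ) = (a:ℝ) + 1 - (s:ℝ) := by
    have : s ≤ a + 1 := by omega
    push_cast [Nat.cast_sub this]
    ring
  have hdiff_le : c * n - (s:ℝ) ≤ (((a + 1 - s : ℕ)) : ℝ) := by
    rw [hcast_sub]; linarith
  have hdiff_pos : (0:ℝ) < c * n - (s:ℝ) := by linarith
  -- final chain
  have hkey := KST_key (n := n) (s := s) hn1 hc hc2 hcn hs_le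
  have hchain : (c * (n:ℝ)) * (c * n - (s:ℝ))^s ≤ ((n:ℝ))^s * (n:ℝ)^((1:ℝ)-c) := by
    have e1 : (c * n - (s:ℝ))^s ≤ (((a + 1 - s : ℕ)) : ℝ)^s :=
      pow_le_pow_left₀ hdiff_pos.le hdiff_le s
    have e2 : (((a + 1 - s : ℕ)) : ℝ)^s ≤ (s.factorial : ℝ) * (a.choose s : ℝ) := by
      rw [show (((a + 1 - s : ℕ)) : ℝ)^s = (((a + 1 - s)^s : ℕ) : ℝ) by push_cast; ring]
      exact hfac1
    have hHa : (c * n) * ((s.factorial : ℝ) * (a.choose s : ℝ))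
        ≤ (s.factorial : ℝ) * ((H.card : ℝ) * (a.choose s : ℝ)) := by
      have h := mul_le_mul_of_nonneg_right hHcard
        (show (0:ℝ) ≤ (s.factorial : ℝ) * (a.choose s : ℝ) by positivity)
      nlinarith [h]
    have hmid : (s.factorial : ℝ) * ((H.card : ℝ) * (a.choose s : ℝ))
        ≤ (s.factorial : ℝ) * ((n.choose s : ℝ) * (n:ℝ)^((1:ℝ)-c)) := by
      apply mul_le_mul_of_nonneg_left _ (by positivity)
      exact le_trans hsum_lower hsum_upper
    have hlast : (s.factorial : ℝ) * ((n.choose s : ℝ) * (n:ℝ)^((1:ℝ)-c))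
        ≤ ((n:ℝ))^s * (n:ℝ)^((1:ℝ)-c) := by
      have hx : (0:ℝ) ≤ (n:ℝ)^((1:ℝ)-c) := by positivity
      have h := mul_le_mul_of_nonneg_right hfac2 hx
      nlinarith [h]
    have e3 : (c * (n:ℝ)) * (c * n - (s:ℝ))^s ≤ (c * n) * ((s.factorial : ℝ) * (a.choose s : ℝ)) := by
      have hcn0 : (0:ℝ) ≤ c * n := by positivity
      have h12 := le_trans e1 e2
      have h := mul_le_mul_of_nonneg_left h12 hcn0
      nlinarith [h]
    linarith
  linarith
end

section
/- Let $F$ be a bipartite graph with parts $A$ and $B$, where $|A| = m$, and let $s \geq 1$ be an integer with $s \leq m$. Suppose that every complete bipartite subgraph of $F$ with one part of size $s$ contained in $A$ has its other part (in $B$) of size at most $t$. Then $\sum_{u \in B} \binom{d(u)}{s} \leq t \binom{m}{s}$, where $d(u)$ denotes the degree of $u$ in $F$. -/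
/-- **Double counting (inequality (1)).** Let `F` be a bipartite graph with parts `A`
(of size `m`) and `B`, modelled as an edge set `E ⊆ A × B`, and let `1 ≤ s ≤ m`. If every
complete bipartite subgraph of `F` with one part of size `s` contained in `A` has its other
part of size at most `t`, then `∑_{u ∈ B} C(d(u), s) ≤ t * C(m, s)`. -/
theorem sum_choose_degree_le
    {α β : Type*} [Fintype α] [Fintype β] [DecidableEq α] [DecidableEq β]
    (E : Finset (α × β)) (s t : ℕ) (hs : 1 ≤ s) (hsm : s ≤ Fintype.card α)
    (h : ∀ S : Finset α, S.card = s → ∀ T : Finset β,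
        (∀ a ∈ S, ∀ b ∈ T, (a, b) ∈ E) → T.card ≤ t) :
    ∑ u : β, Nat.choose (Finset.univ.filter (fun a => (a, u) ∈ E)).card s
      ≤ t * Nat.choose (Fintype.card α) s := by
  have key : ∀ u : β,
      Nat.choose (Finset.univ.filter (fun a => (a, u) ∈ E)).card s
        = ((Finset.univ : Finset α).powersetCard s |>.filter
            (fun S => S ⊆ Finset.univ.filter (fun a => (a, u) ∈ E))).card := by
    intro u
    rw [← Finset.card_powersetCard]
    congr 1
    ext S
    simp [Finset.mem_powersetCard, and_comm]
  calc ∑ u : β, Nat.choose (Finset.univ.filter (fun a => (a, u) ∈ E)).card s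
      = ∑ u : β, ∑ S ∈ (Finset.univ : Finset α).powersetCard s,
          (if S ⊆ Finset.univ.filter (fun a => (a, u) ∈ E) then 1 else 0) := by
        refine Finset.sum_congr rfl fun u _ => ?_
        rw [key u, Finset.card_filter]
    _ = ∑ S ∈ (Finset.univ : Finset α).powersetCard s, ∑ u : β,
          (if S ⊆ Finset.univ.filter (fun a => (a, u) ∈ E) then 1 else 0) :=
        Finset.sum_comm
    _ ≤ ∑ S ∈ (Finset.univ : Finset α).powersetCard s, t := by
        apply Finset.sum_le_sum
        intro S hS
        rw [← Finset.card_filter]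
        apply h S (Finset.mem_powersetCard.mp hS).2
        intro a ha b hb
        have := Finset.mem_filter.mp hb
        have := this.2 ha
        simpa using this
    _ = t * Nat.choose (Fintype.card α) s := by
        rw [Finset.sum_const, Finset.card_powersetCard, Finset.card_univ, smul_eq_mul,
          mul_comm]
end
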